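/- Let A ∈ GL(d, ℝ) and j ∈ {1, …, d−1} be such that χ_{j−1}(A) < χ_j(A) = χ_{j+1}(A) < χ_{j+2}(A) (with the conventions χ_0 = −∞, χ_{d+1} = +∞) and such that λ_j(A), λ_{j+1}(A) are a pair of non-real complex conjugate eigenvalues. Then there is δ > 0 such that every A' ∈ GL(d, ℝ) with ‖A − A'‖ < δ admits no dominated splitting of index j; i.e., there is no A'-invariant splitting ℝ^d = E ⊕ F with dim E = j such that ‖A'^k v‖/‖v‖ ≤ (1/2)·‖A'^k w‖/‖w‖ for some k and all nonzero v ∈ E, w ∈ F. In particular, the absence of a dominated splitting of index j is robust under perturbation in this situation. -/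

import Mathlib

/-!
If `A'` near `A` had a dominated splitting `E ⊕ F` of index `j`, every complex eigenvalue of
`A'|E` would be at most, in modulus, every eigenvalue of `A'|F`: test the domination on the real
planes spanned by `x, y` where `x + i y` is a complex eigenvector. Being real, `A'|E` also has a
conjugation-invariant spectrum. These conditions on `A'` and the two lists of eigenvalues are
closed, and the eigenvalues of `A'` stay bounded, so by compactness they pass to the limit
`A' → A`: the spectrum of `A` would split into a conjugation-invariant part of size `j` lying below
the rest. Such a part contains the `j - 1` eigenvalues of modulus `< |λ_j|` and exactly one
eigenvalue of modulus `|λ_j|`, which would have to be real, whereas `λ_j, λ_{j+1}` are not.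
-/

abbrev Vd (d : ℕ) := EuclideanSpace ℝ (Fin d)

/-- The multiset of complex eigenvalues (with multiplicity) of an endomorphism. -/
noncomputable def specC {d : ℕ} (A : Vd d →L[ℝ] Vd d) : Multiset ℂ :=
  ((LinearMap.charpoly (A : Vd d →ₗ[ℝ] Vd d)).map (algebraMap ℝ ℂ)).roots

open Polynomial

variable {V : Type*}

section RotationPair

/-- `x + i y` is an eigenvector, with eigenvalue `μ`, of the complexification of `T`. -/
def IsRotationPair [AddCommGroup V] [Module ℝ V] (T : V →ₗ[ℝ] V) (μ : ℂ) (x y : V) : Prop :=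
  T x = μ.re • x - μ.im • y ∧ T y = μ.im • x + μ.re • y

namespace IsRotationPair

variable [AddCommGroup V] [Module ℝ V] {T S : V →ₗ[ℝ] V} {μ ν : ℂ} {x y : V}

theorem mul (hT : IsRotationPair T μ x y) (hS : IsRotationPair S ν x y) :
    IsRotationPair (T * S) (μ * ν) x y := by
  obtain ⟨hSx, hSy⟩ := hS
  constructor
  · rw [Module.End.mul_apply, hSx, map_sub, map_smul, map_smul, hT.1, hT.2]
    simp only [Complex.mul_re, Complex.mul_im]
    module
  · rw [Module.End.mul_apply, hSy, map_add, map_smul, map_smul, hT.1, hT.2]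
    simp only [Complex.mul_re, Complex.mul_im]
    module

theorem pow (h : IsRotationPair T μ x y) : ∀ k : ℕ, IsRotationPair (T ^ k) (μ ^ k) x y
  | 0 => by simp [IsRotationPair]
  | k + 1 => by rw [pow_succ, pow_succ]; exact (h.pow k).mul h

theorem of_restrict {E : Submodule ℝ V} (hE : ∀ v ∈ E, T v ∈ E) {x y : E}
    (h : IsRotationPair (T.restrict hE) μ x y) : IsRotationPair T μ x y :=
  ⟨congrArg Subtype.val h.1, congrArg Subtype.val h.2⟩

end IsRotationPair

theorem Matrix.exists_isRotationPair_of_isRoot {n : Type*} [Fintype n] [DecidableEq n]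
    (M : Matrix n n ℝ) {μ : ℂ} (h : (M.charpoly.map (algebraMap ℝ ℂ)).IsRoot μ) :
    ∃ x y : n → ℝ, (x ≠ 0 ∨ y ≠ 0) ∧ IsRotationPair (Matrix.toLin' M) μ x y := by
  rw [← Matrix.charpoly_map, IsRoot, Matrix.eval_charpoly] at h
  obtain ⟨v, hv0, hv⟩ := Matrix.exists_mulVec_eq_zero_iff.2 h
  have hMv : ∀ i, ∑ k, (M i k : ℂ) * v k = μ * v i := by
    intro i
    have := congrFun hv i
    rw [Matrix.sub_mulVec, Pi.sub_apply, Pi.zero_apply, Matrix.scalar_apply,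
      Matrix.mulVec_diagonal, sub_eq_zero] at this
    simpa [Matrix.mulVec, dotProduct] using this.symm
  refine ⟨fun i => (v i).re, fun i => (v i).im, ?_, ?_, ?_⟩
  · by_contra! h0
    exact hv0 (funext fun i => Complex.ext (congrFun h0.1 i) (congrFun h0.2 i))
  · funext i
    simpa [Matrix.mulVec, dotProduct, Complex.re_sum] using congrArg Complex.re (hMv i)
  · funext i
    simpa [Matrix.mulVec, dotProduct, Complex.im_sum, add_comm] using congrArg Complex.im (hMv i)

theorem LinearMap.exists_isRotationPair_of_isRoot [AddCommGroup V] [Module ℝ V]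
    [FiniteDimensional ℝ V] (T : V →ₗ[ℝ] V) {μ : ℂ}
    (h : (T.charpoly.map (algebraMap ℝ ℂ)).IsRoot μ) :
    ∃ x y : V, (x ≠ 0 ∨ y ≠ 0) ∧ IsRotationPair T μ x y := by
  let b := Module.finBasis ℝ V
  rw [← LinearMap.charpoly_toMatrix T b] at h
  obtain ⟨x, y, hxy, hx, hy⟩ := (LinearMap.toMatrix b b T).exists_isRotationPair_of_isRoot h
  have hT : ∀ z, T (b.equivFun.symm z) = b.equivFun.symm ((LinearMap.toMatrix b b T).mulVec z) := by
    intro z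
    apply b.equivFun.injective
    rw [LinearEquiv.apply_symm_apply, Module.Basis.equivFun_apply,
      ← LinearMap.toMatrix_mulVec_repr b b T, ← Module.Basis.equivFun_apply,
      LinearEquiv.apply_symm_apply]
  refine ⟨b.equivFun.symm x, b.equivFun.symm y,
    hxy.imp (b.equivFun.symm.map_ne_zero_iff).2 (b.equivFun.symm.map_ne_zero_iff).2, ?_, ?_⟩
  · rw [hT, ← Matrix.toLin'_apply, hx, map_sub, map_smul, map_smul]
  · rw [hT, ← Matrix.toLin'_apply, hy, map_add, map_smul, map_smul]

theorem norm_sq_add_norm_sq_pos [NormedAddCommGroup V] {x y : V} (h : x ≠ 0 ∨ y ≠ 0) :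
    0 < ‖x‖ ^ 2 + ‖y‖ ^ 2 := by
  rcases h with h | h <;> have := norm_pos_iff.2 h <;> positivity

theorem IsRotationPair.norm_sq_add_norm_sq [NormedAddCommGroup V] [InnerProductSpace ℝ V]
    {T : V →ₗ[ℝ] V} {μ : ℂ} {x y : V} (h : IsRotationPair T μ x y) :
    ‖T x‖ ^ 2 + ‖T y‖ ^ 2 = ‖μ‖ ^ 2 * (‖x‖ ^ 2 + ‖y‖ ^ 2) := by
  rw [h.1, h.2, Complex.sq_norm, Complex.normSq_apply]
  simp only [← real_inner_self_eq_norm_sq, inner_sub_left, inner_sub_right, inner_add_left,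
    inner_add_right, real_inner_smul_left, real_inner_smul_right, real_inner_comm y x]
  ring

theorem ContinuousLinearMap.norm_le_opNorm_of_isRoot [NormedAddCommGroup V]
    [InnerProductSpace ℝ V] [FiniteDimensional ℝ V] (T : V →L[ℝ] V) {μ : ℂ}
    (h : ((T : V →ₗ[ℝ] V).charpoly.map (algebraMap ℝ ℂ)).IsRoot μ) : ‖μ‖ ≤ ‖T‖ := by
  obtain ⟨x, y, hxy, hpair⟩ := (T : V →ₗ[ℝ] V).exists_isRotationPair_of_isRoot h
  have hsum := norm_sq_add_norm_sq_pos hxy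
  have hμ : ‖μ‖ ^ 2 * (‖x‖ ^ 2 + ‖y‖ ^ 2) ≤ ‖T‖ ^ 2 * (‖x‖ ^ 2 + ‖y‖ ^ 2) := by
    rw [← hpair.norm_sq_add_norm_sq, mul_add]
    gcongr <;> simpa only [coe_coe, ← mul_pow] using
      pow_le_pow_left₀ (norm_nonneg _) (T.le_opNorm _) 2
  exact (pow_le_pow_iff_left₀ (norm_nonneg _) (norm_nonneg _) two_ne_zero).1
    (le_of_mul_le_mul_right hμ hsum)

theorem IsRotationPair.norm_le_mul_of_dominated [NormedAddCommGroup V] [InnerProductSpace ℝ V]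
    {B : V →L[ℝ] V} {E F : Submodule ℝ V} {c : ℝ} (hc : 0 ≤ c)
    (hdom : ∀ u ∈ E, ∀ w ∈ F, ‖B u‖ * ‖w‖ ≤ c * ‖B w‖ * ‖u‖) {μ ν : ℂ} {x y u v : V}
    (hμ : IsRotationPair (B : V →ₗ[ℝ] V) μ x y) (hν : IsRotationPair (B : V →ₗ[ℝ] V) ν u v)
    (hx : x ∈ E) (hy : y ∈ E) (hu : u ∈ F) (hv : v ∈ F) (hxy : x ≠ 0 ∨ y ≠ 0)
    (huv : u ≠ 0 ∨ v ≠ 0) : ‖μ‖ ≤ c * ‖ν‖ := by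
  have hsq : ∀ z ∈ E, ∀ w ∈ F, ‖B z‖ ^ 2 * ‖w‖ ^ 2 ≤ c ^ 2 * ‖B w‖ ^ 2 * ‖z‖ ^ 2 := by
    intro z hz w hw
    simpa only [← mul_pow] using pow_le_pow_left₀ (by positivity) (hdom z hz w hw) 2
  have hsum : (‖B x‖ ^ 2 + ‖B y‖ ^ 2) * (‖u‖ ^ 2 + ‖v‖ ^ 2)
      ≤ c ^ 2 * (‖B u‖ ^ 2 + ‖B v‖ ^ 2) * (‖x‖ ^ 2 + ‖y‖ ^ 2) := by
    linarith [hsq x hx u hu, hsq x hx v hv, hsq y hy u hu, hsq y hy v hv]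
  simp only [← ContinuousLinearMap.coe_coe B, hμ.norm_sq_add_norm_sq,
    hν.norm_sq_add_norm_sq] at hsum
  have hpos := mul_pos (norm_sq_add_norm_sq_pos hxy) (norm_sq_add_norm_sq_pos huv)
  have hsq : ‖μ‖ ^ 2 ≤ (c * ‖ν‖) ^ 2 := le_of_mul_le_mul_right (by linarith) hpos
  exact (pow_le_pow_iff_left₀ (norm_nonneg _) (by positivity) two_ne_zero).1 hsq

end RotationPair

theorem mul_norm_le_of_forall_norm_eq_one [NormedAddCommGroup V] [NormedSpace ℝ V]
    {B : V →L[ℝ] V} {E F : Submodule ℝ V} {c : ℝ}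
    (h : ∀ u ∈ E, ∀ w ∈ F, ‖u‖ = 1 → ‖w‖ = 1 → ‖B u‖ ≤ c * ‖B w‖) :
    ∀ u ∈ E, ∀ w ∈ F, ‖B u‖ * ‖w‖ ≤ c * ‖B w‖ * ‖u‖ := by
  intro u hu w hw
  rcases eq_or_ne u 0 with rfl | hu0
  · simp
  rcases eq_or_ne w 0 with rfl | hw0
  · simp
  have hunit := h (‖u‖⁻¹ • u) (E.smul_mem _ hu) (‖w‖⁻¹ • w) (F.smul_mem _ hw)
    (norm_smul_inv_norm hu0) (norm_smul_inv_norm hw0)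
  simp only [map_smul, norm_smul, norm_inv, norm_norm] at hunit
  have hu' := norm_pos_iff.2 hu0
  have hw' := norm_pos_iff.2 hw0
  rw [inv_mul_le_iff₀ hu'] at hunit
  calc ‖B u‖ * ‖w‖ ≤ ‖u‖ * (c * (‖w‖⁻¹ * ‖B w‖)) * ‖w‖ := by gcongr
    _ = c * ‖B w‖ * ‖u‖ := by field_simp

theorem norm_le_norm_of_isRoot_restrict [NormedAddCommGroup V] [InnerProductSpace ℝ V]
    [FiniteDimensional ℝ V] {T : V →L[ℝ] V} {E F : Submodule ℝ V} (hE : ∀ v ∈ E, T v ∈ E)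
    (hF : ∀ v ∈ F, T v ∈ F) {k : ℕ} (hk : k ≠ 0) {c : ℝ} (hc₀ : 0 ≤ c) (hc₁ : c ≤ 1)
    (hdom : ∀ u ∈ E, ∀ w ∈ F, ‖(T ^ k) u‖ * ‖w‖ ≤ c * ‖(T ^ k) w‖ * ‖u‖) {μ ν : ℂ}
    (hμ : (((T : V →ₗ[ℝ] V).restrict hE).charpoly.map (algebraMap ℝ ℂ)).IsRoot μ)
    (hν : (((T : V →ₗ[ℝ] V).restrict hF).charpoly.map (algebraMap ℝ ℂ)).IsRoot ν) :
    ‖μ‖ ≤ ‖ν‖ := by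
  obtain ⟨x, y, hxy, hpE⟩ := LinearMap.exists_isRotationPair_of_isRoot _ hμ
  obtain ⟨u, v, huv, hpF⟩ := LinearMap.exists_isRotationPair_of_isRoot _ hν
  have hpE' := (hpE.of_restrict hE).pow k
  have hpF' := (hpF.of_restrict hF).pow k
  rw [← ContinuousLinearMap.toLinearMap_pow] at hpE' hpF'
  have h := hpE'.norm_le_mul_of_dominated hc₀ hdom hpF' x.2 y.2 u.2 v.2
    (by simpa using hxy) (by simpa using huv)
  rw [norm_pow, norm_pow] at h
  refine (pow_le_pow_iff_left₀ (norm_nonneg _) (norm_nonneg _) hk).1 (h.trans ?_)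
  exact mul_le_of_le_one_left (by positivity) hc₁

theorem LinearMap.charpoly_eq_mul_of_isCompl {K : Type*} [Field K] [AddCommGroup V] [Module K V]
    [FiniteDimensional K V] (f : V →ₗ[K] V) {E F : Submodule K V} (hc : IsCompl E F)
    (hE : ∀ v ∈ E, f v ∈ E) (hF : ∀ v ∈ F, f v ∈ F) :
    f.charpoly = (f.restrict hE).charpoly * (f.restrict hF).charpoly := by
  let e := Submodule.prodEquivOfIsCompl E F hc
  have hf : e.conj ((f.restrict hE).prodMap (f.restrict hF)) = f := by
    ext v
    obtain ⟨⟨x, y⟩, rfl⟩ := e.surjective v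
    simp [e, LinearEquiv.conj_apply, Submodule.coe_prodEquivOfIsCompl']
  conv_lhs => rw [← hf]
  rw [LinearEquiv.charpoly_conj, LinearMap.charpoly_prodMap]

theorem Multiset.exists_eq_map_univ {α ι : Type*} [Fintype ι] (s : Multiset α)
    (hs : Multiset.card s = Fintype.card ι) : ∃ a : ι → α, s = Finset.univ.val.map a := by
  induction s using Quotient.inductionOn with | h l => ?_
  rw [Multiset.quot_mk_to_coe, Multiset.coe_card] at hs
  let e := (Fintype.equivFin ι).trans (finCongr hs.symm)
  refine ⟨l.get ∘ e, ?_⟩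
  rw [← Multiset.map_map, Multiset.map_univ_val_equiv, Fin.univ_val_map, List.ofFn_get]
  rfl

theorem Polynomial.exists_eq_prod_X_sub_C {K ι : Type*} [Field K] [IsAlgClosed K] [Fintype ι]
    {p : K[X]} (hp : p.Monic) (hdeg : p.natDegree = Fintype.card ι) :
    ∃ a : ι → K, p = ∏ i, (X - C (a i)) := by
  have hsplit := IsAlgClosed.splits p
  obtain ⟨a, ha⟩ := p.roots.exists_eq_map_univ (ι := ι)
    (by rw [← hsplit.natDegree_eq_card_roots, hdeg])
  refine ⟨a, ?_⟩
  rw [hsplit.eq_prod_roots_of_monic hp, ha, Multiset.map_map]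
  rfl

theorem Polynomial.roots_prod_X_sub_C_fintype {R ι : Type*} [CommRing R] [IsDomain R]
    [Fintype ι] (a : ι → R) : (∏ i, (X - C (a i))).roots = Finset.univ.val.map a := by
  have := roots_multiset_prod_X_sub_C (Finset.univ.val.map a)
  rwa [Multiset.map_map, ← Finset.prod_eq_multiset_prod] at this

theorem Polynomial.map_conj_map_ofReal (p : ℝ[X]) :
    (p.map (algebraMap ℝ ℂ)).map (starRingEnd ℂ) = p.map (algebraMap ℝ ℂ) := by
  rw [Polynomial.map_map]
  congr 1
  ext x
  simp

theorem continuous_eval_map_charpoly [NormedAddCommGroup V] [NormedSpace ℝ V]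
    [FiniteDimensional ℝ V] (t : ℂ) :
    Continuous fun B : V →L[ℝ] V => ((B : V →ₗ[ℝ] V).charpoly.map (algebraMap ℝ ℂ)).eval t := by
  let b := Module.finBasis ℝ V
  let M := (LinearMap.toMatrix b b).toLinearMap ∘ₗ ContinuousLinearMap.coeLM ℝ
  have hM : Continuous M := LinearMap.continuous_of_finiteDimensional M
  have heval : ∀ B : V →L[ℝ] V, ((B : V →ₗ[ℝ] V).charpoly.map (algebraMap ℝ ℂ)).eval t =
      (Matrix.scalar _ t - (M B).map (algebraMap ℝ ℂ)).det := by
    intro B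
    rw [← LinearMap.charpoly_toMatrix _ b, ← Matrix.charpoly_map, Matrix.eval_charpoly]
    rfl
  simp only [heval]
  exact (continuous_const.sub (hM.matrix_map Complex.continuous_ofReal)).matrix_det

section SpectralSplitting

variable {ι κ : Type*} [Fintype ι] [Fintype κ]

/-- What a dominated splitting `E ⊕ F` with `dim E = card ι` leaves on the spectrum of `B`
(`a` lists the eigenvalues on `E`, `b` those on `F`); unlike domination, it is closed in `B`. -/
def IsSpectralSplitting [NormedAddCommGroup V] [NormedSpace ℝ V] [FiniteDimensional ℝ V]
    (B : V →L[ℝ] V) (a : ι → ℂ) (b : κ → ℂ) : Prop :=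
  (∏ i, (X - C (a i))) * ∏ i, (X - C (b i)) =
      (B : V →ₗ[ℝ] V).charpoly.map (algebraMap ℝ ℂ) ∧
    (∀ i i', ‖a i‖ ≤ ‖b i'‖) ∧ ∏ i, (X - C (starRingEnd ℂ (a i))) = ∏ i, (X - C (a i))

theorem exists_isSpectralSplitting [NormedAddCommGroup V] [InnerProductSpace ℝ V]
    [FiniteDimensional ℝ V] {T : V →L[ℝ] V} {E F : Submodule ℝ V} (hc : IsCompl E F)
    (hE : ∀ v ∈ E, T v ∈ E) (hF : ∀ v ∈ F, T v ∈ F)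
    (hι : Fintype.card ι = Module.finrank ℝ E) (hκ : Fintype.card κ = Module.finrank ℝ F)
    {k : ℕ} (hk : k ≠ 0) (hdom : ∀ u ∈ E, ∀ w ∈ F, ‖u‖ = 1 → ‖w‖ = 1 →
      ‖(T ^ k) u‖ ≤ 1 / 2 * ‖(T ^ k) w‖) :
    ∃ (a : ι → ℂ) (b : κ → ℂ), IsSpectralSplitting T a b := by
  obtain ⟨a, ha⟩ := exists_eq_prod_X_sub_C (ι := ι)
    ((LinearMap.charpoly_monic ((T : V →ₗ[ℝ] V).restrict hE)).map (algebraMap ℝ ℂ))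
    (by rw [natDegree_map, LinearMap.charpoly_natDegree, hι])
  obtain ⟨b, hb⟩ := exists_eq_prod_X_sub_C (ι := κ)
    ((LinearMap.charpoly_monic ((T : V →ₗ[ℝ] V).restrict hF)).map (algebraMap ℝ ℂ))
    (by rw [natDegree_map, LinearMap.charpoly_natDegree, hκ])
  refine ⟨a, b, ?_, fun i i' => ?_, ?_⟩
  · rw [← ha, ← hb, ← Polynomial.map_mul, ← LinearMap.charpoly_eq_mul_of_isCompl _ hc]
  · refine norm_le_norm_of_isRoot_restrict hE hF hk (by norm_num) (by norm_num)
      (mul_norm_le_of_forall_norm_eq_one hdom) ?_ ?_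
    · rw [ha]; exact (isRoot_prod _ _ _).2 ⟨i, Finset.mem_univ i, root_X_sub_C.2 rfl⟩
    · rw [hb]; exact (isRoot_prod _ _ _).2 ⟨i', Finset.mem_univ i', root_X_sub_C.2 rfl⟩
  · have := congrArg (Polynomial.map (starRingEnd ℂ)) ha
    rw [map_conj_map_ofReal, ha, Polynomial.map_prod] at this
    simpa using this.symm

variable [NormedAddCommGroup V] [InnerProductSpace ℝ V] [FiniteDimensional ℝ V]
  {B : V →L[ℝ] V} {a : ι → ℂ} {b : κ → ℂ}

theorem IsSpectralSplitting.roots_eq (h : IsSpectralSplitting B a b) :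
    ((B : V →ₗ[ℝ] V).charpoly.map (algebraMap ℝ ℂ)).roots =
      Finset.univ.val.map a + Finset.univ.val.map b := by
  rw [← h.1, roots_mul (h.1 ▸ ((LinearMap.charpoly_monic _).map _).ne_zero),
    roots_prod_X_sub_C_fintype, roots_prod_X_sub_C_fintype]

theorem IsSpectralSplitting.map_conj (h : IsSpectralSplitting B a b) :
    (Finset.univ.val.map a).map (starRingEnd ℂ) = Finset.univ.val.map a := by
  have := congrArg roots h.2.2
  rw [roots_prod_X_sub_C_fintype, roots_prod_X_sub_C_fintype] at this
  rwa [Multiset.map_map]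

theorem IsSpectralSplitting.norm_le_norm_of_mem (h : IsSpectralSplitting B a b) :
    ∀ s ∈ Finset.univ.val.map a, ∀ t ∈ Finset.univ.val.map b, ‖s‖ ≤ ‖t‖ := by
  simp only [Multiset.mem_map, Finset.mem_val, Finset.mem_univ, true_and]
  rintro _ ⟨i, rfl⟩ _ ⟨i', rfl⟩
  exact h.2.1 i i'

theorem IsSpectralSplitting.norm_le_opNorm (h : IsSpectralSplitting B a b) : ‖(a, b)‖ ≤ ‖B‖ := by
  have hroot : ∀ z ∈ Finset.univ.val.map a + Finset.univ.val.map b, ‖z‖ ≤ ‖B‖ := by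
    intro z hz
    rw [← h.roots_eq] at hz
    exact B.norm_le_opNorm_of_isRoot (isRoot_of_mem_roots hz)
  refine norm_prod_le_iff.2 ⟨(pi_norm_le_iff_of_nonneg (norm_nonneg B)).2 fun i => ?_,
    (pi_norm_le_iff_of_nonneg (norm_nonneg B)).2 fun i => ?_⟩
  · exact hroot _ (Multiset.mem_add.2 (.inl (Multiset.mem_map_of_mem _ (Finset.mem_univ i))))
  · exact hroot _ (Multiset.mem_add.2 (.inr (Multiset.mem_map_of_mem _ (Finset.mem_univ i))))

theorem isClosed_setOf_isSpectralSplitting :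
    IsClosed {p : (V →L[ℝ] V) × (ι → ℂ) × (κ → ℂ) | IsSpectralSplitting p.1 p.2.1 p.2.2} := by
  have poly_eq_iff : ∀ p q : ℂ[X], p = q ↔ ∀ t, p.eval t = q.eval t :=
    fun p q => ⟨fun h t => h ▸ rfl, Polynomial.funext⟩
  simp only [IsSpectralSplitting, poly_eq_iff, eval_mul, eval_prod, eval_sub, eval_X, eval_C,
    Set.ofPred_and, Set.ofPred_forall]
  refine .inter (isClosed_iInter fun t => isClosed_eq ?_ ?_) (.inter
    (isClosed_iInter fun i => isClosed_iInter fun i' => isClosed_le ?_ ?_)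
    (isClosed_iInter fun t => isClosed_eq ?_ ?_))
  · fun_prop
  · exact (continuous_eval_map_charpoly t).comp continuous_fst
  all_goals fun_prop

theorem IsSpectralSplitting.exists_of_forall_dist_lt {A : V →L[ℝ] V}
    (h : ∀ δ > 0, ∃ B : V →L[ℝ] V, ‖A - B‖ < δ ∧
      ∃ (a : ι → ℂ) (b : κ → ℂ), IsSpectralSplitting B a b) :
    ∃ (a : ι → ℂ) (b : κ → ℂ), IsSpectralSplitting A a b := by
  let K := {p : (V →L[ℝ] V) × (ι → ℂ) × (κ → ℂ) | IsSpectralSplitting p.1 p.2.1 p.2.2} ∩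
    Metric.closedBall A 1 ×ˢ Metric.closedBall 0 (‖A‖ + 1)
  have hK : IsCompact K := ((isCompact_closedBall _ _).prod (isCompact_closedBall _ _)).inter_left
    isClosed_setOf_isSpectralSplitting
  have hA : A ∈ closure (Prod.fst '' K) := by
    refine Metric.mem_closure_iff.2 fun ε hε => ?_
    obtain ⟨B, hB, a, b, hab⟩ := h (min ε 1) (by positivity)
    have hB1 : ‖B - A‖ ≤ 1 := by rw [norm_sub_rev]; exact hB.le.trans (min_le_right _ _)
    refine ⟨B, ⟨(B, a, b), ⟨hab, ?_, ?_⟩, rfl⟩, ?_⟩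
    · rwa [Metric.mem_closedBall, dist_eq_norm]
    · rw [mem_closedBall_zero_iff]
      calc ‖(a, b)‖ ≤ ‖B‖ := hab.norm_le_opNorm
        _ ≤ ‖A‖ + ‖B - A‖ := norm_le_insert' B A
        _ ≤ ‖A‖ + 1 := by gcongr
    · rw [dist_eq_norm]; exact hB.trans_le (min_le_left _ _)
  rw [(hK.image continuous_fst).isClosed.closure_eq] at hA
  obtain ⟨⟨_, a, b⟩, ⟨hab, -⟩, rfl⟩ := hA
  exact ⟨a, b, hab⟩

end SpectralSplitting

/-- `S` must contain everything of modulus `< ρ` and exactly one element of modulus `ρ`,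
which conjugation invariance would force to be real. -/
theorem Multiset.map_conj_ne_self {S T : Multiset ℂ} {ρ : ℝ}
    (hST : ∀ s ∈ S, ∀ t ∈ T, ‖s‖ ≤ ‖t‖)
    (hlt : ((S + T).filter (‖·‖ < ρ)).card + 1 = S.card)
    (hle : S.card + 1 = ((S + T).filter (‖·‖ ≤ ρ)).card)
    (hρ : ∀ z ∈ S + T, ‖z‖ = ρ → z.im ≠ 0) : S.map (starRingEnd ℂ) ≠ S := by
  intro hconj
  have hS : ∀ s ∈ S, ‖s‖ ≤ ρ := by
    by_contra! ⟨s, hs, hsρ⟩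
    have hT : T.filter (‖·‖ ≤ ρ) = 0 :=
      Multiset.filter_eq_nil.2 fun t ht => not_le.2 (hsρ.trans_le (hST s hs t ht))
    have := Multiset.card_le_card (Multiset.filter_le (‖·‖ ≤ ρ) S)
    rw [Multiset.filter_add, hT, add_zero] at hle
    omega
  have hT : ∀ t ∈ T, ρ ≤ ‖t‖ := by
    by_contra! ⟨t, ht, htρ⟩
    have hS' : S.filter (‖·‖ < ρ) = S :=
      Multiset.filter_eq_self.2 fun s hs => (hST s hs t ht).trans_lt htρ
    have := Multiset.card_le_card (Multiset.filter_le (‖·‖ < ρ) T)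
    rw [Multiset.filter_add, hS', Multiset.card_add] at hlt
    omega
  have hTlt : T.filter (‖·‖ < ρ) = 0 := Multiset.filter_eq_nil.2 fun t ht => not_lt.2 (hT t ht)
  have hcard : (S.filter (‖·‖ = ρ)).card = 1 := by
    have hsplit := Multiset.filter_add_not (‖·‖ < ρ) S
    have hnot : S.filter (¬‖·‖ < ρ) = S.filter (‖·‖ = ρ) :=
      Multiset.filter_congr fun s hs => by have := hS s hs; constructor <;> intro <;> linarith
    rw [Multiset.filter_add, hTlt, add_zero] at hlt
    have := congrArg Multiset.card hsplit
    rw [Multiset.card_add, hnot] at this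
    omega
  obtain ⟨s, hs⟩ := Multiset.card_eq_one.1 hcard
  have hsS : s ∈ S.filter (‖·‖ = ρ) := hs ▸ Multiset.mem_singleton_self s
  have hfix : starRingEnd ℂ s = s := by
    have := congrArg (Multiset.filter (‖·‖ = ρ)) hconj
    simp only [Multiset.filter_map, Function.comp_def, Complex.norm_conj, hs,
      Multiset.map_singleton, Multiset.singleton_inj] at this
    exact this
  exact hρ s (Multiset.mem_add.2 (.inl (Multiset.mem_filter.1 hsS).1))
    (Multiset.mem_filter.1 hsS).2 (Complex.conj_eq_iff_im.1 hfix)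

section SortedSpectrum

variable {d : ℕ} {r : Fin d → ℂ} {i₀ i₁ : Fin d}

theorem norm_lt_iff_of_gap (hi : (i₁ : ℕ) = i₀ + 1)
    (hlow : ∀ m : Fin d, (m : ℕ) < i₀ → ‖r m‖ < ‖r i₀‖)
    (hhigh : ∀ m : Fin d, (i₁ : ℕ) < m → ‖r i₁‖ < ‖r m‖) (heq : ‖r i₀‖ = ‖r i₁‖) (m : Fin d) :
    ‖r m‖ < ‖r i₀‖ ↔ m < i₀ := by
  refine ⟨fun h => ?_, hlow m⟩
  by_contra! hm
  rcases (show m = i₀ ∨ m = i₁ ∨ (i₁ : ℕ) < m by rw [Fin.le_def] at hm; omega) with rfl | rfl | hm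
  · exact h.false
  · exact (heq ▸ h).false
  · exact (hhigh m hm).not_gt (heq ▸ h)

theorem norm_le_iff_of_gap (hi : (i₁ : ℕ) = i₀ + 1)
    (hlow : ∀ m : Fin d, (m : ℕ) < i₀ → ‖r m‖ < ‖r i₀‖)
    (hhigh : ∀ m : Fin d, (i₁ : ℕ) < m → ‖r i₁‖ < ‖r m‖) (heq : ‖r i₀‖ = ‖r i₁‖) (m : Fin d) :
    ‖r m‖ ≤ ‖r i₀‖ ↔ m ≤ i₁ := by
  refine ⟨fun h => ?_, fun hm => ?_⟩
  · by_contra! hm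
    exact (hhigh m hm).not_ge (heq ▸ h)
  rcases (show (m : ℕ) < i₀ ∨ m = i₀ ∨ m = i₁ by rw [Fin.le_def] at hm; omega) with hm | rfl | rfl
  · exact (hlow m hm).le
  · exact le_rfl
  · exact heq.ge

theorem map_conj_ne_self_of_gap (hi : (i₁ : ℕ) = i₀ + 1)
    (hlow : ∀ m : Fin d, (m : ℕ) < i₀ → ‖r m‖ < ‖r i₀‖)
    (hhigh : ∀ m : Fin d, (i₁ : ℕ) < m → ‖r i₁‖ < ‖r m‖) (heq : ‖r i₀‖ = ‖r i₁‖)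
    (hconj : r i₁ = starRingEnd ℂ (r i₀)) (him : (r i₀).im ≠ 0) {S T : Multiset ℂ}
    (hST : ∀ s ∈ S, ∀ t ∈ T, ‖s‖ ≤ ‖t‖) (hS : S.card = i₁)
    (hR : S + T = Finset.univ.val.map r) : S.map (starRingEnd ℂ) ≠ S := by
  have hcard : ∀ (p : ℂ → Prop) [DecidablePred p],
      ((Finset.univ.val.map r).filter p).card = (Finset.univ.filter (p ∘ r)).card :=
    fun p _ => by rw [Multiset.filter_map, Multiset.card_map]; rfl
  refine Multiset.map_conj_ne_self (ρ := ‖r i₀‖) hST ?_ ?_ fun z hz hzρ => ?_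
  · have : Finset.univ.filter ((‖·‖ < ‖r i₀‖) ∘ r) = Finset.Iio i₀ := by
      ext m
      simp [norm_lt_iff_of_gap hi hlow hhigh heq]
    rw [hR, hcard, this, Fin.card_Iio, hS, hi]
  · have : Finset.univ.filter ((‖·‖ ≤ ‖r i₀‖) ∘ r) = Finset.Iic i₁ := by
      ext m
      simp [norm_le_iff_of_gap hi hlow hhigh heq]
    rw [hR, hcard, this, Fin.card_Iic, hS]
  rw [hR] at hz
  obtain ⟨m, -, rfl⟩ := Multiset.mem_map.1 hz
  have hle := (norm_le_iff_of_gap hi hlow hhigh heq m).1 hzρ.le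
  have hnlt := mt (norm_lt_iff_of_gap hi hlow hhigh heq m).2 hzρ.not_lt
  rcases (show m = i₀ ∨ m = i₁ by rw [Fin.le_def] at hle; rw [Fin.lt_def] at hnlt; omega)
    with rfl | rfl
  · exact him
  · rw [hconj, Complex.conj_im]
    exact neg_ne_zero.2 him

end SortedSpectrum

/-- `r` is `0`-based, so the paper's `λ_j, λ_{j+1}` are `r ⟨j - 1, _⟩, r ⟨j, _⟩`. -/
theorem complex_pair_robust_nondomination {d : ℕ} (A : Vd d ≃L[ℝ] Vd d)
    (r : Fin d → ℂ)
    (hr : specC (A : Vd d →L[ℝ] Vd d) = Multiset.map r Finset.univ.val)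
    (j : ℕ) (hj1 : 1 ≤ j) (hjd : j < d)
    (hlow : ∀ m : Fin d, (m : ℕ) < j - 1 →
      ‖r m‖ < ‖r ⟨j - 1, by omega⟩‖)
    (hhigh : ∀ m : Fin d, j < (m : ℕ) →
      ‖r ⟨j, hjd⟩‖ < ‖r m‖)
    (heq : ‖r ⟨j - 1, by omega⟩‖ = ‖r ⟨j, hjd⟩‖)
    (hconj : r ⟨j, hjd⟩ = (starRingEnd ℂ) (r ⟨j - 1, by omega⟩))
    (him : (r ⟨j - 1, by omega⟩).im ≠ 0) :
    ∃ δ > 0, ∀ A' : Vd d →L[ℝ] Vd d,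
      ‖(A : Vd d →L[ℝ] Vd d) - A'‖ < δ →
      ¬ ∃ (E F : Submodule ℝ (Vd d)) (k : ℕ),
        1 ≤ k ∧ IsCompl E F ∧ Module.finrank ℝ E = j ∧
        (∀ v ∈ E, A' v ∈ E) ∧ (∀ v ∈ F, A' v ∈ F) ∧
        ∀ u ∈ E, ∀ w ∈ F, ‖u‖ = 1 → ‖w‖ = 1 →
          ‖(A' ^ k) u‖ ≤ (1 / 2) * ‖(A' ^ k) w‖ := by
  by_contra! hnear
  obtain ⟨a, b, hab⟩ : ∃ (a : Fin j → ℂ) (b : Fin (d - j) → ℂ),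
      IsSpectralSplitting (A : Vd d →L[ℝ] Vd d) a b := by
    refine IsSpectralSplitting.exists_of_forall_dist_lt fun δ hδ => ?_
    obtain ⟨A', hA', E, F, k, hk, hc, hEj, hE, hF, hdom⟩ := hnear δ hδ
    have hEF := Submodule.finrank_add_eq_of_isCompl hc
    rw [finrank_euclideanSpace_fin] at hEF
    exact ⟨A', hA', exists_isSpectralSplitting hc hE hF
      (by rw [Fintype.card_fin, hEj]) (by rw [Fintype.card_fin]; omega) (by omega) hdom⟩
  exact map_conj_ne_self_of_gap (by simp only; omega) hlow hhigh heq hconj him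
    hab.norm_le_norm_of_mem (by simp) (hab.roots_eq.symm.trans hr) hab.map_conj
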